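/- arXiv:1112.1564 — 6 statements merged into one kernel-verified Lean document; each statement's English description precedes it below -/
import Mathlib

section
/- Let B = (b_1, …, b_n) be a 3/4-LLL reduced basis and let B' be its lifted basis. Then λ1(L(B))² ≤ λ1(L(B'))² ≤ λ1(L(B))² + 2^{-n/2}. -/
noncomputable section

/-- The lattice generated by the vectors `B i`: all integer linear combinations. -/
def latticeOf {m n : ℕ} (B : Fin n → EuclideanSpace ℝ (Fin m)) :
    Set (EuclideanSpace ℝ (Fin m)) :=
  {v | ∃ x : Fin n → ℤ, v = ∑ i, (x i : ℝ) • B i}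

/-- `λ₁ L`: the minimum Euclidean norm of a nonzero vector of `L`. -/
def lambda1 {m : ℕ} (L : Set (EuclideanSpace ℝ (Fin m))) : ℝ :=
  sInf {r | ∃ v ∈ L, v ≠ 0 ∧ ‖v‖ = r}

/-- `λ₂ L`: the smallest `r` such that `L` contains two linearly independent
vectors of norm at most `r`. -/
def lambda2 {m : ℕ} (L : Set (EuclideanSpace ℝ (Fin m))) : ℝ :=
  sInf {r | ∃ v ∈ L, ∃ w ∈ L, LinearIndependent ℝ ![v, w] ∧ ‖v‖ ≤ r ∧ ‖w‖ ≤ r}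

instance (n : ℕ) : WellFoundedLT (Fin n) := inferInstance

/-- The Gram–Schmidt coefficient `μ i j = ⟨b i, b̃ j⟩ / ⟨b̃ j, b̃ j⟩`. -/
def mu {m n : ℕ} (B : Fin n → EuclideanSpace ℝ (Fin m)) (i j : Fin n) : ℝ :=
  (inner ℝ (B i) (InnerProductSpace.gramSchmidt ℝ B j) : ℝ) /
    (inner ℝ (InnerProductSpace.gramSchmidt ℝ B j) (InnerProductSpace.gramSchmidt ℝ B j) : ℝ)

/-- `B` is a 3/4-LLL reduced basis. -/
def LLLReduced {m n : ℕ} (B : Fin n → EuclideanSpace ℝ (Fin m)) : Prop :=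
  (∀ i j : Fin n, j < i → |mu B i j| ≤ 1 / 2) ∧
  (∀ i : Fin n, ∀ h : (i : ℕ) + 1 < n,
    (3 / 4 : ℝ) * ‖InnerProductSpace.gramSchmidt ℝ B i‖ ^ 2 ≤
      ‖mu B ⟨(i : ℕ) + 1, h⟩ i • InnerProductSpace.gramSchmidt ℝ B i + InnerProductSpace.gramSchmidt ℝ B ⟨(i : ℕ) + 1, h⟩‖ ^ 2)

/-- The lifted basis `B'` in `ℝ^(m+n)`: `b'ᵢ` agrees with `bᵢ` on the first `m`
coordinates, has `2^(2(i-1)n)/2^(2n²)` in coordinate `m+i` and `0` elsewhere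
(here `i : Fin n` is the zero-based index, corresponding to `i-1` in one-based notation). -/
def lifted {m n : ℕ} (B : Fin n → EuclideanSpace ℝ (Fin m)) :
    Fin n → EuclideanSpace ℝ (Fin (m + n)) :=
  fun i => (EuclideanSpace.equiv (Fin (m + n)) ℝ).symm
    (fun j => if h : (j : ℕ) < m then B i ⟨j, h⟩
      else if (j : ℕ) = m + (i : ℕ) then (2 : ℝ) ^ (2 * (i : ℕ) * n) / 2 ^ (2 * n ^ 2) else 0)

/-!
Write `v = ∑ αⱼ bⱼ` and `wⱼ = 2^(2(j-1)n) / 2^(2n²)`. The lift adds `∑ⱼ (αⱼ wⱼ)²` to `‖v‖²`, which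
gives the lower bound, and for the upper bound it is enough to lift the lattice vectors with
`‖v‖ ≤ ‖b₁‖`. For those, the Lovász condition gives `‖b₁‖ ≤ 2^(j-1) ‖b̃ⱼ‖`, so the Gram–Schmidt
coordinates `⟨v, b̃ⱼ⟩ / ‖b̃ⱼ‖²` are at most `2ⁿ`, and back-substitution through the size-reduced
unitriangular matrix `μ` gives `|αⱼ| ≤ 2ⁿ (3/2)^(n-j)`. The weight `wⱼ` beats this bound,
`|αⱼ| wⱼ ≤ 2⁻ⁿ`, so the lift costs at most `n 4⁻ⁿ ≤ 2⁻ⁿ ≤ 2^(-n/2)`.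
-/

open Finset InnerProductSpace

section Lambda1

variable {m m' : ℕ} {L : Set (EuclideanSpace ℝ (Fin m))} {L' : Set (EuclideanSpace ℝ (Fin m'))}

lemma lambda1_nonneg : 0 ≤ lambda1 L :=
  Real.sInf_nonneg (by rintro _ ⟨v, -, -, rfl⟩; exact norm_nonneg v)

lemma lambda1_le_norm {v : EuclideanSpace ℝ (Fin m)} (hv : v ∈ L) (hv0 : v ≠ 0) :
    lambda1 L ≤ ‖v‖ :=
  csInf_le ⟨0, by rintro _ ⟨w, -, -, rfl⟩; exact norm_nonneg w⟩ ⟨v, hv, hv0, rfl⟩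

lemma le_lambda1 {r : ℝ} (hL : ∃ v ∈ L, v ≠ 0) (h : ∀ v ∈ L, v ≠ 0 → r ≤ ‖v‖) :
    r ≤ lambda1 L := by
  obtain ⟨v, hv, hv0⟩ := hL
  exact le_csInf ⟨_, v, hv, hv0, rfl⟩ (by rintro _ ⟨w, hw, hw0, rfl⟩; exact h w hw hw0)

lemma lambda1_eq_zero (h : ∀ v ∈ L, v = 0) : lambda1 L = 0 := by
  have : {r | ∃ v ∈ L, v ≠ 0 ∧ ‖v‖ = r} = ∅ :=
    Set.eq_empty_of_forall_notMem (by rintro _ ⟨v, hv, hv0, -⟩; exact hv0 (h v hv))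
  rw [lambda1, this, Real.sInf_empty]

lemma lambda1_le_lambda1 (hL' : ∃ w ∈ L', w ≠ 0)
    (h : ∀ w ∈ L', w ≠ 0 → ∃ v ∈ L, v ≠ 0 ∧ ‖v‖ ≤ ‖w‖) : lambda1 L ≤ lambda1 L' :=
  le_lambda1 hL' fun w hw hw0 =>
    let ⟨_, hv, hv0, hvw⟩ := h w hw hw0
    (lambda1_le_norm hv hv0).trans hvw

lemma sq_lambda1_le_sq_lambda1_add {v₀ : EuclideanSpace ℝ (Fin m)} {R c : ℝ} (hv₀ : v₀ ∈ L)
    (hv₀0 : v₀ ≠ 0) (hv₀R : ‖v₀‖ ≤ R)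
    (h : ∀ v ∈ L, v ≠ 0 → ‖v‖ ≤ R → ∃ w ∈ L', w ≠ 0 ∧ ‖w‖ ^ 2 ≤ ‖v‖ ^ 2 + c) :
    lambda1 L' ^ 2 ≤ lambda1 L ^ 2 + c := by
  have hlift : ∀ v ∈ L, v ≠ 0 → ‖v‖ ≤ R → √(lambda1 L' ^ 2 - c) ≤ ‖v‖ := by
    intro v hv hv0 hvR
    obtain ⟨w, hw, hw0, hwv⟩ := h v hv hv0 hvR
    have : lambda1 L' ^ 2 ≤ ‖w‖ ^ 2 := by gcongr; exacts [lambda1_nonneg, lambda1_le_norm hw hw0]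
    exact (Real.sqrt_le_left (norm_nonneg v)).2 (by linarith)
  have : √(lambda1 L' ^ 2 - c) ≤ lambda1 L := by
    refine le_lambda1 ⟨v₀, hv₀, hv₀0⟩ fun v hv hv0 => ?_
    rcases le_or_gt ‖v‖ R with hvR | hRv
    · exact hlift v hv hv0 hvR
    · exact (hlift v₀ hv₀ hv₀0 hv₀R).trans (hv₀R.trans hRv.le)
  linarith [(Real.sqrt_le_left lambda1_nonneg).1 this]

end Lambda1

section BackSubstitution

variable {ι : Type*} [LinearOrder ι] [LocallyFiniteOrderTop ι] {α : ι → ℝ} {K : ℝ}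

lemma sum_abs_add_le_of_abs_le_add_half_sum_Ioi
    (h : ∀ j, |α j| ≤ K + (∑ i ∈ Ioi j, |α i|) / 2) {s : Finset ι} (hs : ∀ j ∈ s, Ioi j ⊆ s) :
    ∑ i ∈ s, |α i| + 2 * K ≤ 2 * K * (3 / 2) ^ #s := by
  classical
  induction s using Finset.induction_on_min with
  | empty => simp
  | insert a s ha ih =>
    have has : a ∉ s := fun h => lt_irrefl a (ha a h)
    have hIoi : Ioi a = s := by
      ext i
      refine ⟨fun hi => ?_, fun hi => mem_Ioi.2 (ha i hi)⟩
      rcases mem_insert.1 (hs a (mem_insert_self a s) hi) with rfl | hi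
      exacts [absurd (mem_Ioi.1 hi) (lt_irrefl _), hi]
    have hs' : ∀ j ∈ s, Ioi j ⊆ s := fun j hj i hi =>
      (mem_insert.1 (hs j (mem_insert_of_mem hj) hi)).resolve_left
        (by rintro rfl; exact lt_asymm (ha j hj) (mem_Ioi.1 hi))
    have := h a
    rw [hIoi] at this
    rw [sum_insert has, card_insert_of_notMem has, pow_succ]
    nlinarith [ih hs']

lemma abs_le_of_abs_le_add_half_sum_Ioi (h : ∀ j, |α j| ≤ K + (∑ i ∈ Ioi j, |α i|) / 2) (j : ι) :
    |α j| ≤ K * (3 / 2) ^ #(Ioi j) := by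
  have := sum_abs_add_le_of_abs_le_add_half_sum_Ioi h (s := Ioi j) fun i hi =>
    Ioi_subset_Ioi (mem_Ioi.1 hi).le
  linarith [h j]

end BackSubstitution

section GramSchmidt

variable {m n : ℕ} {B : Fin n → EuclideanSpace ℝ (Fin m)}

local notation "b̃" => gramSchmidt ℝ B

lemma gramSchmidt_mk_zero (hn : 0 < n) : b̃ ⟨0, hn⟩ = B ⟨0, hn⟩ := by
  have : Iio (⟨0, hn⟩ : Fin n) = ∅ := Finset.eq_empty_of_forall_notMem fun i hi => by
    simpa [Fin.lt_def] using mem_Iio.1 hi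
  rw [gramSchmidt_def, this, sum_empty, sub_zero]

lemma mu_eq_zero_of_lt {i j : Fin n} (h : i < j) : mu B i j = 0 := by
  rw [mu, real_inner_comm, gramSchmidt_inv_triangular ℝ B h, zero_div]

lemma real_inner_gramSchmidt_self (i : Fin n) : ⟪B i, b̃ i⟫_ℝ = ‖b̃ i‖ ^ 2 := by
  conv_lhs => rw [gramSchmidt_def'' ℝ B i]
  rw [inner_add_left, real_inner_self_eq_norm_sq, sum_inner, add_eq_left]
  refine sum_eq_zero fun k hk => ?_
  rw [real_inner_smul_left, gramSchmidt_orthogonal ℝ B (mem_Iio.1 hk).ne, mul_zero]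

lemma mu_self (hB : LinearIndependent ℝ B) (i : Fin n) : mu B i i = 1 := by
  rw [mu, real_inner_gramSchmidt_self, real_inner_self_eq_norm_sq,
    div_self (pow_ne_zero 2 (norm_ne_zero_iff.2 (gramSchmidt_ne_zero i hB)))]

lemma sum_mul_mu (α : Fin n → ℝ) (j : Fin n) :
    ∑ i, α i * mu B i j = ⟪∑ i, α i • B i, b̃ j⟫_ℝ / ‖b̃ j‖ ^ 2 := by
  simp only [mu, real_inner_self_eq_norm_sq, sum_inner, real_inner_smul_left, sum_div,
    mul_div_assoc]

lemma abs_sum_mul_mu_mul_norm_le (hB : LinearIndependent ℝ B) (α : Fin n → ℝ) (j : Fin n) :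
    |∑ i, α i * mu B i j| * ‖b̃ j‖ ≤ ‖∑ i, α i • B i‖ := by
  have hpos : 0 < ‖b̃ j‖ := norm_pos_iff.2 (gramSchmidt_ne_zero j hB)
  calc |∑ i, α i * mu B i j| * ‖b̃ j‖ = |⟪∑ i, α i • B i, b̃ j⟫_ℝ| / ‖b̃ j‖ := by
        rw [sum_mul_mu, abs_div, abs_pow, abs_norm]
        field_simp
    _ ≤ ‖∑ i, α i • B i‖ :=
        div_le_of_le_mul₀ hpos.le (norm_nonneg _) (abs_real_inner_le_norm _ _)

lemma sum_mul_mu_eq (hB : LinearIndependent ℝ B) (α : Fin n → ℝ) (j : Fin n) :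
    ∑ i, α i * mu B i j = α j + ∑ i ∈ Ioi j, α i * mu B i j := by
  rw [← sum_subset (subset_univ (Ici j)) fun i _ hi => by
      rw [mu_eq_zero_of_lt (not_le.1 (mem_Ici.not.1 hi)), mul_zero],
    Ici_eq_cons_Ioi, sum_cons, mu_self hB, mul_one]

/-- `βⱼ = ∑ᵢ αᵢ μᵢⱼ` satisfies `|βⱼ| ≤ K`, and `α` is recovered from `β` by back-substitution
through the unitriangular, size-reduced matrix `μ`. -/
lemma abs_le_of_norm_sum_smul_le (hB : LinearIndependent ℝ B)
    (hsize : ∀ i j : Fin n, j < i → |mu B i j| ≤ 1 / 2) (α : Fin n → ℝ) {K : ℝ}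
    (hK : ∀ j, ‖∑ i, α i • B i‖ ≤ K * ‖b̃ j‖) (j : Fin n) :
    |α j| ≤ K * (3 / 2) ^ (n - 1 - j) := by
  rw [← Fin.card_Ioi]
  refine abs_le_of_abs_le_add_half_sum_Ioi (fun j => ?_) j
  have hβ : |∑ i, α i * mu B i j| ≤ K :=
    le_of_mul_le_mul_right ((abs_sum_mul_mu_mul_norm_le hB α j).trans (hK j))
      (norm_pos_iff.2 (gramSchmidt_ne_zero j hB))
  have hrest : |∑ i ∈ Ioi j, α i * mu B i j| ≤ (∑ i ∈ Ioi j, |α i|) / 2 := by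
    rw [sum_div]
    refine (abs_sum_le_sum_abs _ _).trans (sum_le_sum fun i hi => ?_)
    rw [abs_mul, ← mul_one_div]
    exact mul_le_mul_of_nonneg_left (hsize i j (mem_Ioi.1 hi)) (abs_nonneg _)
  have := sum_mul_mu_eq hB α j
  calc |α j| = |∑ i, α i * mu B i j - ∑ i ∈ Ioi j, α i * mu B i j| := by
        rw [this, add_sub_cancel_right]
    _ ≤ _ := (abs_sub _ _).trans (add_le_add hβ hrest)

lemma norm_gramSchmidt_le_two_mul_succ (hLLL : LLLReduced B) (i : ℕ) (hi : i + 1 < n) :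
    ‖b̃ ⟨i, by omega⟩‖ ≤ 2 * ‖b̃ ⟨i + 1, hi⟩‖ := by
  set μ := mu B ⟨i + 1, hi⟩ ⟨i, by omega⟩
  have hμ : μ ^ 2 ≤ 1 / 4 := by
    have := abs_le.1 (hLLL.1 ⟨i + 1, hi⟩ ⟨i, by omega⟩ (Fin.mk_lt_mk.2 (by omega)))
    nlinarith
  have hpyth : ‖μ • b̃ ⟨i, by omega⟩ + b̃ ⟨i + 1, hi⟩‖ ^ 2 =
      μ ^ 2 * ‖b̃ ⟨i, by omega⟩‖ ^ 2 + ‖b̃ ⟨i + 1, hi⟩‖ ^ 2 := by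
    rw [norm_add_sq_real, real_inner_smul_left,
      gramSchmidt_orthogonal ℝ B (by simp [Fin.ext_iff]), norm_smul, mul_pow,
      Real.norm_eq_abs, sq_abs]
    ring
  have hlov := hLLL.2 ⟨i, by omega⟩ hi
  rw [hpyth] at hlov
  rw [← pow_le_pow_iff_left₀ (norm_nonneg _) (by positivity) two_ne_zero]
  nlinarith [sq_nonneg ‖b̃ ⟨i, by omega⟩‖]

lemma norm_gramSchmidt_zero_le (hLLL : LLLReduced B) (j : ℕ) (hj : j < n) :
    ‖b̃ ⟨0, by omega⟩‖ ≤ 2 ^ j * ‖b̃ ⟨j, hj⟩‖ := by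
  induction j with
  | zero => simp
  | succ j ih =>
    calc ‖b̃ ⟨0, by omega⟩‖ ≤ 2 ^ j * ‖b̃ ⟨j, by omega⟩‖ := ih (by omega)
      _ ≤ 2 ^ j * (2 * ‖b̃ ⟨j + 1, hj⟩‖) := by
        gcongr
        exact norm_gramSchmidt_le_two_mul_succ hLLL j hj
      _ = 2 ^ (j + 1) * ‖b̃ ⟨j + 1, hj⟩‖ := by ring

lemma abs_le_of_norm_sum_smul_le_norm_zero (hB : LinearIndependent ℝ B) (hLLL : LLLReduced B)
    (hn : 0 < n) (α : Fin n → ℝ) (hα : ‖∑ i, α i • B i‖ ≤ ‖B ⟨0, hn⟩‖) (j : Fin n) :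
    |α j| ≤ 2 ^ n * (3 / 2) ^ (n - 1 - j) := by
  refine abs_le_of_norm_sum_smul_le hB hLLL.1 α (fun j => ?_) j
  calc ‖∑ i, α i • B i‖ ≤ ‖b̃ ⟨0, hn⟩‖ := by rwa [gramSchmidt_mk_zero]
    _ ≤ 2 ^ (j : ℕ) * ‖b̃ j‖ := norm_gramSchmidt_zero_le hLLL j j.isLt
    _ ≤ 2 ^ n * ‖b̃ j‖ := by gcongr; exacts [one_le_two, j.isLt.le]

end GramSchmidt

section Lift

def liftWeight (n j : ℕ) : ℝ := 2 ^ (2 * j * n) / 2 ^ (2 * n ^ 2)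

variable {m n : ℕ} (B : Fin n → EuclideanSpace ℝ (Fin m))

lemma lifted_apply_castAdd (i : Fin n) (k : Fin m) : lifted B i (Fin.castAdd n k) = B i k := by
  simp [lifted]

lemma lifted_apply_natAdd (i j : Fin n) :
    lifted B i (Fin.natAdd m j) = if i = j then liftWeight n i else 0 := by
  simp [lifted, liftWeight, Fin.ext_iff, eq_comm]

lemma norm_sq_sum_smul_lifted (x : Fin n → ℝ) :
    ‖∑ i, x i • lifted B i‖ ^ 2 = ‖∑ i, x i • B i‖ ^ 2 + ∑ j, (x j * liftWeight n j) ^ 2 := by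
  simp only [EuclideanSpace.norm_sq_eq, Fin.sum_univ_add, Real.norm_eq_abs, sq_abs]
  simp [lifted_apply_castAdd, lifted_apply_natAdd]

lemma norm_sum_smul_le_norm_sum_smul_lifted (x : Fin n → ℝ) :
    ‖∑ i, x i • B i‖ ≤ ‖∑ i, x i • lifted B i‖ := by
  rw [← pow_le_pow_iff_left₀ (norm_nonneg _) (norm_nonneg _) two_ne_zero,
    norm_sq_sum_smul_lifted]
  exact le_add_of_nonneg_right (sum_nonneg fun _ _ => sq_nonneg _)

lemma abs_mul_liftWeight_le {a : ℝ} {j : ℕ} (hj : j < n)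
    (ha : |a| ≤ 2 ^ n * (3 / 2) ^ (n - 1 - j)) : |a| * liftWeight n j ≤ (1 / 2) ^ n := by
  have hexp : n + (n - 1 - j) + 2 * j * n + n ≤ 2 * n ^ 2 := by
    obtain ⟨d, rfl⟩ := Nat.exists_eq_add_of_lt hj
    rw [show j + d + 1 - 1 - j = d by omega]
    nlinarith
  rw [liftWeight, one_div_pow, ← mul_div_assoc, div_le_div_iff₀ (by positivity) (by positivity),
    one_mul]
  calc |a| * 2 ^ (2 * j * n) * 2 ^ n ≤ 2 ^ n * 2 ^ (n - 1 - j) * 2 ^ (2 * j * n) * 2 ^ n := by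
        gcongr
        exact ha.trans (by gcongr; norm_num)
    _ = 2 ^ (n + (n - 1 - j) + 2 * j * n + n) := by simp only [pow_add]
    _ ≤ 2 ^ (2 * n ^ 2) := pow_le_pow_right₀ one_le_two hexp

lemma sum_sq_mul_liftWeight_le (x : Fin n → ℝ)
    (hx : ∀ j : Fin n, |x j| ≤ 2 ^ n * (3 / 2) ^ (n - 1 - j)) :
    ∑ j, (x j * liftWeight n j) ^ 2 ≤ (1 / 2) ^ n := by
  calc ∑ j, (x j * liftWeight n j) ^ 2 ≤ ∑ _j : Fin n, ((1 / 2) ^ n) ^ 2 := by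
        refine sum_le_sum fun j _ => ?_
        have hw : 0 ≤ liftWeight n j := by unfold liftWeight; positivity
        rw [← sq_abs, abs_mul, abs_of_nonneg hw]
        exact pow_le_pow_left₀ (by positivity) (abs_mul_liftWeight_le j.isLt (hx j)) 2
    _ = n * (1 / 2) ^ n * (1 / 2) ^ n := by
        rw [sum_const, card_univ, Fintype.card_fin, nsmul_eq_mul, sq, mul_assoc]
    _ ≤ (1 / 2) ^ n := by
        refine mul_le_of_le_one_left (by positivity) ?_
        rw [one_div_pow, mul_one_div, div_le_one (by positivity)]
        exact_mod_cast Nat.lt_two_pow_self.le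

lemma mem_latticeOf_self (i : Fin n) : B i ∈ latticeOf B :=
  ⟨Pi.single i 1, by simp [Pi.single_apply]⟩

lemma lifted_ne_zero (i : Fin n) : lifted B i ≠ 0 := fun h => by
  have := congrArg (· (Fin.natAdd m i)) h
  simp [lifted_apply_natAdd, liftWeight] at this

variable {B}

lemma lambda1_latticeOf_le_lifted (hB : LinearIndependent ℝ B) (hn : 0 < n) :
    lambda1 (latticeOf B) ≤ lambda1 (latticeOf (lifted B)) := by
  refine lambda1_le_lambda1 ⟨_, mem_latticeOf_self _ ⟨0, hn⟩, lifted_ne_zero _ _⟩ ?_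
  rintro _ ⟨x, rfl⟩ hw0
  refine ⟨_, ⟨x, rfl⟩, fun hv0 => hw0 ?_, ?_⟩
  · have hx := Fintype.linearIndependent_iff.1 hB _ hv0
    simp [hx]
  · exact norm_sum_smul_le_norm_sum_smul_lifted B _

lemma sq_lambda1_lifted_le (hB : LinearIndependent ℝ B) (hLLL : LLLReduced B) (hn : 0 < n) :
    lambda1 (latticeOf (lifted B)) ^ 2 ≤ lambda1 (latticeOf B) ^ 2 + (1 / 2) ^ n := by
  refine sq_lambda1_le_sq_lambda1_add (mem_latticeOf_self B ⟨0, hn⟩) (hB.ne_zero _) le_rfl ?_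
  rintro _ ⟨x, rfl⟩ hv0 hvR
  refine ⟨_, ⟨x, rfl⟩, fun hw0 => hv0 (norm_le_zero_iff.1 ?_), ?_⟩
  · simpa [hw0] using norm_sum_smul_le_norm_sum_smul_lifted B (fun i => (x i : ℝ))
  · rw [norm_sq_sum_smul_lifted]
    gcongr
    exact sum_sq_mul_liftWeight_le _ (abs_le_of_norm_sum_smul_le_norm_zero hB hLLL hn _ hvR)

end Lift

/-- For a 3/4-LLL reduced basis `B` with lifted basis `B'`,
`λ₁(L(B))² ≤ λ₁(L(B'))² ≤ λ₁(L(B))² + 2^{-n/2}`. -/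
theorem stmt1 {m n : ℕ} (B : Fin n → EuclideanSpace ℝ (Fin m))
    (hB : LinearIndependent ℝ B) (hLLL : LLLReduced B) :
    lambda1 (latticeOf B) ^ 2 ≤ lambda1 (latticeOf (lifted B)) ^ 2 ∧
    lambda1 (latticeOf (lifted B)) ^ 2 ≤
      lambda1 (latticeOf B) ^ 2 + (2 : ℝ) ^ (-(n : ℝ) / 2) := by
  rcases Nat.eq_zero_or_pos n with rfl | hn
  · have h0 {k : ℕ} (C : Fin 0 → EuclideanSpace ℝ (Fin k)) : lambda1 (latticeOf C) = 0 :=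
      lambda1_eq_zero (by rintro _ ⟨x, rfl⟩; simp)
    simp [h0]
  refine ⟨pow_le_pow_left₀ lambda1_nonneg (lambda1_latticeOf_le_lifted hB hn) 2, ?_⟩
  calc lambda1 (latticeOf (lifted B)) ^ 2 ≤ lambda1 (latticeOf B) ^ 2 + (1 / 2) ^ n :=
        sq_lambda1_lifted_le hB hLLL hn
    _ ≤ lambda1 (latticeOf B) ^ 2 + (2 : ℝ) ^ (-(n : ℝ) / 2) := by
        gcongr
        rw [one_div, inv_pow, ← Real.rpow_natCast, ← Real.rpow_neg zero_le_two]
        exact Real.rpow_le_rpow_of_exponent_le one_le_two (by linarith [n.cast_nonneg (α := ℝ)])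
end
end

section
/- Let α, β ∈ ℤ^n satisfy |α_i| < 2^{3n/2} and |β_i| < 2^{3n/2} for all i, and suppose there exists an index i with |α_i| ≠ |β_i|. Then |Σ_{i=1}^n (α_i² − β_i²) · 2^{4(i-1)n}/2^{4n²}| ≥ 2^{-4n²}. -/
/-!
Clearing the denominator `2^{4n²}`, the sum becomes the integer `T = ∑ dᵢ bⁱ` with base
`b = 2^{4n}` and digits `dᵢ = αᵢ² - βᵢ²`. The bounds give `|dᵢ| < 2^{3n} < b`, and a
representation in base `b` with digits of absolute value below `b` vanishes only if every
digit does. Since `|αᵢ| ≠ |βᵢ|` for some `i`, some digit is nonzero, so `|T| ≥ 1`.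
-/

theorem eq_zero_of_sum_mul_pow_eq_zero {n : ℕ} {b : ℤ} {d : Fin n → ℤ}
    (hd : ∀ i, |d i| < b) (hsum : ∑ i, d i * b ^ (i : ℕ) = 0) (i : Fin n) : d i = 0 := by
  induction n with
  | zero => exact i.elim0
  | succ n ih =>
    have hsplit : ∑ i, d i * b ^ (i : ℕ) = d 0 + b * ∑ i : Fin n, d i.succ * b ^ (i : ℕ) := by
      rw [Fin.sum_univ_succ, Finset.mul_sum]
      simp only [Fin.val_zero, pow_zero, mul_one, Fin.val_succ, pow_succ]
      congr 1
      exact Finset.sum_congr rfl fun _ _ => by ring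
    rw [hsplit] at hsum
    have hd0 : d 0 = 0 :=
      Int.eq_zero_of_abs_lt_dvd ⟨-∑ i : Fin n, d i.succ * b ^ (i : ℕ), by linarith⟩ (hd 0)
    have hb : b ≠ 0 := ((abs_nonneg _).trans_lt (hd 0)).ne'
    rw [hd0, zero_add, mul_eq_zero, or_iff_right hb] at hsum
    exact Fin.cases hd0 (ih (fun i => hd i.succ) hsum) i

theorem one_le_abs_sum_mul_pow {n : ℕ} {b : ℤ} {d : Fin n → ℤ}
    (hd : ∀ i, |d i| < b) (hne : ∃ i, d i ≠ 0) : 1 ≤ |∑ i, d i * b ^ (i : ℕ)| := by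
  obtain ⟨i, hi⟩ := hne
  exact Int.one_le_abs fun hsum => hi (eq_zero_of_sum_mul_pow_eq_zero hd hsum i)

theorem sq_lt_two_pow_of_abs_lt {x : ℝ} {m : ℕ} (hx : |x| < (2 : ℝ) ^ ((m : ℝ) / 2)) :
    x ^ 2 < 2 ^ m := by
  calc x ^ 2 = |x| ^ 2 := (sq_abs x).symm
    _ < ((2 : ℝ) ^ ((m : ℝ) / 2)) ^ 2 := by gcongr
    _ = 2 ^ m := by
      rw [← Real.rpow_mul_natCast zero_le_two, ← Real.rpow_natCast]
      norm_num

theorem stmt3_general {n : ℕ} (α β : Fin n → ℤ)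
    (hα : ∀ i, (|α i| : ℝ) < (2 : ℝ) ^ (3 * (n : ℝ) / 2))
    (hβ : ∀ i, (|β i| : ℝ) < (2 : ℝ) ^ (3 * (n : ℝ) / 2))
    (hne : ∃ i, |α i| ≠ |β i|) :
    ((2 : ℝ) ^ (4 * n ^ 2))⁻¹ ≤
      |∑ i : Fin n, ((α i : ℝ) ^ 2 - (β i : ℝ) ^ 2) *
        ((2 : ℝ) ^ (4 * (i : ℕ) * n) / (2 : ℝ) ^ (4 * n ^ 2))| := by
  have hsq (γ : Fin n → ℤ) (hγ : ∀ i, (|γ i| : ℝ) < (2 : ℝ) ^ (3 * (n : ℝ) / 2)) (i : Fin n) :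
      γ i ^ 2 < 2 ^ (3 * n) := by
    exact_mod_cast sq_lt_two_pow_of_abs_lt (x := γ i) (m := 3 * n) (by push_cast; exact hγ i)
  set d : Fin n → ℤ := fun i => α i ^ 2 - β i ^ 2
  have hd (i : Fin n) : |d i| < 2 ^ (4 * n) :=
    (abs_sub_lt_of_nonneg_of_lt (sq_nonneg _) (hsq α hα i) (sq_nonneg _) (hsq β hβ i)).trans_le
      (pow_le_pow_right₀ one_le_two (by omega))
  have hdne : ∃ i, d i ≠ 0 := by
    obtain ⟨i, hi⟩ := hne
    exact ⟨i, sub_ne_zero.2 fun h => hi ((sq_eq_sq_iff_abs_eq_abs _ _).1 h)⟩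
  have hsum : ∑ i : Fin n, ((α i : ℝ) ^ 2 - (β i : ℝ) ^ 2) *
      ((2 : ℝ) ^ (4 * (i : ℕ) * n) / (2 : ℝ) ^ (4 * n ^ 2))
      = ((∑ i, d i * (2 ^ (4 * n)) ^ (i : ℕ) : ℤ) : ℝ) / 2 ^ (4 * n ^ 2) := by
    rw [Int.cast_sum, Finset.sum_div]
    refine Finset.sum_congr rfl fun i _ => ?_
    push_cast [d, ← pow_mul]
    ring_nf
  rw [hsum, abs_div, abs_of_pos (by positivity : (0 : ℝ) < 2 ^ (4 * n ^ 2)), inv_eq_one_div]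
  gcongr
  exact_mod_cast one_le_abs_sum_mul_pow hd hdne

/-- If `α, β ∈ ℤⁿ` satisfy `|αᵢ| < 2^{3n/2}` and `|βᵢ| < 2^{3n/2}` for all `i`,
and `|αᵢ| ≠ |βᵢ|` for some `i`, then
`|∑ᵢ (αᵢ² - βᵢ²) · 2^{4(i-1)n} / 2^{4n²}| ≥ 2^{-4n²}`
(the index `i : Fin n` is zero-based, corresponding to `i-1` in one-based notation). -/
theorem stmt3 {n : ℕ} (hn : 1 ≤ n) (α β : Fin n → ℤ)
    (hα : ∀ i, (|α i| : ℝ) < (2 : ℝ) ^ (3 * (n : ℝ) / 2))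
    (hβ : ∀ i, (|β i| : ℝ) < (2 : ℝ) ^ (3 * (n : ℝ) / 2))
    (hne : ∃ i, |α i| ≠ |β i|) :
    ((2 : ℝ) ^ (4 * n ^ 2))⁻¹ ≤
      |∑ i : Fin n, ((α i : ℝ) ^ 2 - (β i : ℝ) ^ 2) *
        ((2 : ℝ) ^ (4 * (i : ℕ) * n) / (2 : ℝ) ^ (4 * n ^ 2))| :=
  stmt3_general α β hα hβ hne
end

section
/- Let b_1, …, b_n ∈ ℝ^m be linearly independent, let η be an integer with η ≥ n, and define the perturbed vectors b_i'' = b_i + (2^{2(i-1)η}/2^{2η²}) · 𝟙, where 𝟙 ∈ ℝ^m is the all-ones vector. If v = Σ_{i=1}^n α_i b_i with α ∈ ℤ^n and |α_i| < 2^η for all i, then ‖Σ_{i=1}^n α_i b_i''‖_∞ ≤ ‖v‖_∞ + 2^{1-η}, where ‖·‖_∞ denotes the ℓ∞ (maximum absolute coordinate) norm. -/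
/-!
Adding `dᵢ • 𝟙` to `bᵢ` changes `∑ αᵢ bᵢ` by `(∑ αᵢ dᵢ) • 𝟙`, whose sup norm is at most
`|∑ αᵢ dᵢ|`. With `|αᵢ| < 2^η` and `i < n ≤ η`, the `i`-th term is at most
`2^(1 - η - n) · 2^i`, and these sum to less than `2^(1 - η)`.
-/

open Finset

theorem norm_sum_smul_add_smul_le {ι E : Type*} [SeminormedAddCommGroup E] [NormedSpace ℝ E]
    (s : Finset ι) (a d : ι → ℝ) (b : ι → E) (u : E) :
    ‖∑ i ∈ s, a i • (b i + d i • u)‖ ≤ ‖∑ i ∈ s, a i • b i‖ + |∑ i ∈ s, a i * d i| * ‖u‖ := by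
  have hsplit : ∑ i ∈ s, a i • (b i + d i • u) = ∑ i ∈ s, a i • b i + (∑ i ∈ s, a i * d i) • u := by
    simp only [smul_add, smul_smul, sum_add_distrib, sum_smul]
  rw [hsplit, ← Real.norm_eq_abs, ← norm_smul]
  exact norm_add_le _ _

theorem two_zpow_mul_weight_le {η : ℤ} {n i : ℕ} (hi : i < n) (hη : (n : ℤ) ≤ η) :
    (2 : ℝ) ^ η * ((2 : ℝ) ^ (2 * (i : ℤ) * η) / (2 : ℝ) ^ (2 * η ^ 2)) ≤
      (2 : ℝ) ^ (1 - η - n) * 2 ^ i := by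
  rw [← zpow_natCast, ← zpow_sub₀ two_ne_zero, ← zpow_add₀ two_ne_zero,
    ← zpow_add₀ two_ne_zero]
  refine zpow_le_zpow_right₀ one_le_two ?_
  have hi' : (i : ℤ) + 1 ≤ n := by exact_mod_cast hi
  nlinarith

theorem abs_sum_mul_weight_le {n : ℕ} {η : ℤ} (hη : (n : ℤ) ≤ η) (α : Fin n → ℝ)
    (hα : ∀ i, |α i| < (2 : ℝ) ^ η) :
    |∑ i, α i * ((2 : ℝ) ^ (2 * ((i : ℕ) : ℤ) * η) / (2 : ℝ) ^ (2 * η ^ 2))| ≤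
      (2 : ℝ) ^ (1 - η) := by
  have hterm (i : Fin n) :
      |α i * ((2 : ℝ) ^ (2 * ((i : ℕ) : ℤ) * η) / (2 : ℝ) ^ (2 * η ^ 2))| ≤
        (2 : ℝ) ^ (1 - η - n) * 2 ^ (i : ℕ) := by
    rw [abs_mul, abs_of_pos (a := _ / _) (by positivity)]
    exact (mul_le_mul_of_nonneg_right (hα i).le (by positivity)).trans
      (two_zpow_mul_weight_le i.isLt hη)
  have hgeom : ∑ i : Fin n, (2 : ℝ) ^ (i : ℕ) ≤ 2 ^ n := by
    rw [Fin.sum_univ_eq_sum_range (fun i => (2 : ℝ) ^ i)]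
    linarith [geom_sum_mul (2 : ℝ) n]
  calc _ ≤ ∑ i : Fin n, (2 : ℝ) ^ (1 - η - n) * 2 ^ (i : ℕ) :=
        (abs_sum_le_sum_abs _ _).trans (sum_le_sum fun i _ => hterm i)
    _ ≤ (2 : ℝ) ^ (1 - η - n) * 2 ^ n := by
        rw [← mul_sum]; gcongr
    _ = (2 : ℝ) ^ (1 - η) := by
        rw [← zpow_natCast, ← zpow_add₀ two_ne_zero, sub_add_cancel]

theorem stmt6_general {m n : ℕ} (b : Fin n → (Fin m → ℝ))
    (η : ℤ) (hη : (n : ℤ) ≤ η) (α : Fin n → ℤ)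
    (hα : ∀ i, (|α i| : ℝ) < (2 : ℝ) ^ η) :
    ‖∑ i, (α i : ℝ) •
        (b i + ((2 : ℝ) ^ (2 * ((i : ℕ) : ℤ) * η) / (2 : ℝ) ^ (2 * η ^ 2)) •
          (fun _ => 1 : Fin m → ℝ))‖ ≤
      ‖∑ i, (α i : ℝ) • b i‖ + (2 : ℝ) ^ (1 - η) := by
  refine (norm_sum_smul_add_smul_le _ _ _ _ _).trans (add_le_add_right ?_ _)
  have hone : ‖(fun _ => 1 : Fin m → ℝ)‖ ≤ 1 := by
    simpa using pi_norm_const_le (ι := Fin m) (1 : ℝ)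
  exact (mul_le_of_le_one_right (abs_nonneg _) hone).trans (abs_sum_mul_weight_le hη _ hα)

/-- Let `b₁, …, bₙ ∈ ℝ^m` (with the ℓ∞ norm, which is the norm on
`Fin m → ℝ`) be linearly independent, `η ≥ n` an integer, and
`bᵢ'' = bᵢ + (2^{2(i-1)η}/2^{2η²}) • 𝟙` the perturbed vectors (zero-based index
`i : Fin n` corresponds to `i-1`). If `v = ∑ αᵢ bᵢ` with `α ∈ ℤⁿ` and `|αᵢ| < 2^η`
for all `i`, then `‖∑ αᵢ bᵢ''‖∞ ≤ ‖v‖∞ + 2^{1-η}`. -/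
theorem stmt6 {m n : ℕ} (b : Fin n → (Fin m → ℝ)) (hb : LinearIndependent ℝ b)
    (η : ℤ) (hη : (n : ℤ) ≤ η) (α : Fin n → ℤ)
    (hα : ∀ i, (|α i| : ℝ) < (2 : ℝ) ^ η) :
    ‖∑ i, (α i : ℝ) •
        (b i + ((2 : ℝ) ^ (2 * ((i : ℕ) : ℤ) * η) / (2 : ℝ) ^ (2 * η ^ 2)) •
          (fun _ => 1 : Fin m → ℝ))‖ ≤
      ‖∑ i, (α i : ℝ) • b i‖ + (2 : ℝ) ^ (1 - η) :=
  stmt6_general b η hη α hα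
end

section
/- Let L = L(B) be a lattice of rank n generated by a basis B = (b_1, …, b_n) of linearly independent vectors in ℝ^m. Then the set {v ∈ L : ‖v‖ = λ1(L)} has cardinality at most 2^{n+1}. -/
/-!
If two shortest vectors `v, w` of a lattice have integer coordinates of the same parity, then
`v - w` and `v + w` both lie in `2L`. By the parallelogram law
`‖v - w‖² + ‖v + w‖² = 4 λ₁²`, so they cannot both be nonzero vectors of `2L`, whose norms are at
least `2 λ₁`; hence `w = ± v`. Each of the `2ⁿ` parity classes thus contains at most two shortest
vectors.
-/

noncomputable section

section

variable {E : Type*} [NormedAddCommGroup E] [InnerProductSpace ℝ E]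

theorem eq_or_eq_neg_of_sub_add_eq_two_smul {L : Set E} {r : ℝ}
    (hmin : ∀ u ∈ L, u ≠ 0 → r ≤ ‖u‖) {v w u u' : E} (hv : ‖v‖ = r) (hw : ‖w‖ = r)
    (hu : u ∈ L) (hu' : u' ∈ L) (hsub : v - w = (2 : ℝ) • u) (hadd : v + w = (2 : ℝ) • u') :
    v = w ∨ v = -w := by
  by_contra! ⟨hvw, hvnw⟩
  have hu0 : u ≠ 0 := by
    rintro rfl
    exact hvw (sub_eq_zero.mp (by simpa using hsub))
  have hu'0 : u' ≠ 0 := by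
    rintro rfl
    exact hvnw (eq_neg_of_add_eq_zero_left (by simpa using hadd))
  have hpar := parallelogram_law_with_norm ℝ v w
  rw [hsub, hadd, norm_smul, norm_smul, Real.norm_two, hv, hw] at hpar
  have hr : 0 ≤ r := hv ▸ norm_nonneg v
  have hru := hmin u hu hu0
  have hru' := hmin u' hu' hu'0
  have hpos := norm_pos_iff.mpr hu0
  nlinarith

end

theorem Set.encard_le_two_of_forall_eq_or_eq {α : Type*} {T : Set α} (g : α → α)
    (h : ∀ a ∈ T, ∀ b ∈ T, a = b ∨ a = g b) : T.encard ≤ 2 := by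
  rcases T.eq_empty_or_nonempty with rfl | ⟨a, ha⟩
  · simp
  · calc T.encard ≤ ({a, g a} : Set α).encard := Set.encard_le_encard fun b hb => h b hb a ha
      _ ≤ ({g a} : Set α).encard + 1 := Set.encard_insert_le _ _
      _ = 2 := by rw [Set.encard_singleton]; rfl

theorem lambda1_le_norm_s7 {m : ℕ} {L : Set (EuclideanSpace ℝ (Fin m))}
    {u : EuclideanSpace ℝ (Fin m)} (hu : u ∈ L) (hu0 : u ≠ 0) : lambda1 L ≤ ‖u‖ :=
  csInf_le ⟨0, by rintro _ ⟨v, -, -, rfl⟩; exact norm_nonneg v⟩ ⟨u, hu, hu0, rfl⟩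

section

variable {m n : ℕ} (B : Fin n → EuclideanSpace ℝ (Fin m))

def parityClass (p : Fin n → ZMod 2) : Set (EuclideanSpace ℝ (Fin m)) :=
  {v | ∃ x : Fin n → ℤ, v = ∑ i, (x i : ℝ) • B i ∧ ∀ i, (x i : ZMod 2) = p i}

theorem latticeOf_subset_iUnion_parityClass : latticeOf B ⊆ ⋃ p, parityClass B p := by
  rintro v ⟨x, rfl⟩
  exact Set.mem_iUnion.mpr ⟨fun i => x i, x, rfl, fun _ => rfl⟩

theorem exists_mem_latticeOf_sub_eq_two_smul {x y : Fin n → ℤ}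
    (h : ∀ i, (x i : ZMod 2) = y i) :
    ∃ u ∈ latticeOf B, ∑ i, (x i : ℝ) • B i - ∑ i, (y i : ℝ) • B i = (2 : ℝ) • u := by
  have hdvd : ∀ i, 2 ∣ x i - y i := fun i =>
    by exact_mod_cast (ZMod.intCast_eq_intCast_iff_dvd_sub _ _ 2).mp (h i).symm
  choose z hz using hdvd
  refine ⟨∑ i, (z i : ℝ) • B i, ⟨z, rfl⟩, ?_⟩
  simp only [Finset.smul_sum, smul_smul, ← Finset.sum_sub_distrib, ← sub_smul]
  refine Finset.sum_congr rfl fun i _ => ?_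
  rw [← Int.cast_sub, hz i]
  push_cast
  rfl

theorem eq_or_eq_neg_of_mem_parityClass {p : Fin n → ZMod 2} {v w : EuclideanSpace ℝ (Fin m)}
    (hv : v ∈ parityClass B p) (hw : w ∈ parityClass B p)
    (hvn : ‖v‖ = lambda1 (latticeOf B)) (hwn : ‖w‖ = lambda1 (latticeOf B)) :
    v = w ∨ v = -w := by
  obtain ⟨x, rfl, hx⟩ := hv
  obtain ⟨y, rfl, hy⟩ := hw
  obtain ⟨u, hu, hsub⟩ := exists_mem_latticeOf_sub_eq_two_smul B (x := x) (y := y)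
    fun i => (hx i).trans (hy i).symm
  obtain ⟨u', hu', hadd⟩ := exists_mem_latticeOf_sub_eq_two_smul B (x := x) (y := -y)
    fun i => by simp [hx i, ← hy i, ZMod.neg_eq_self_mod_two]
  refine eq_or_eq_neg_of_sub_add_eq_two_smul (fun _ => lambda1_le_norm_s7)
    hvn hwn hu hu' hsub ?_
  simpa [sub_eq_add_neg, ← Finset.sum_neg_distrib, neg_smul] using hadd

end

theorem stmt7_general {m n : ℕ} (B : Fin n → EuclideanSpace ℝ (Fin m)) :
    {v ∈ latticeOf B | ‖v‖ = lambda1 (latticeOf B)}.Finite ∧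
    {v ∈ latticeOf B | ‖v‖ = lambda1 (latticeOf B)}.ncard ≤ 2 ^ (n + 1) := by
  set S := {v ∈ latticeOf B | ‖v‖ = lambda1 (latticeOf B)}
  have hcover : S ⊆ ⋃ p, S ∩ parityClass B p := by
    rw [← Set.inter_iUnion]
    exact Set.subset_inter subset_rfl fun v hv => latticeOf_subset_iUnion_parityClass B hv.1
  have hclass (p : Fin n → ZMod 2) : (S ∩ parityClass B p).encard ≤ 2 :=
    Set.encard_le_two_of_forall_eq_or_eq Neg.neg fun v hv w hw =>
      eq_or_eq_neg_of_mem_parityClass B hv.2 hw.2 hv.1.2 hw.1.2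
  refine Set.encard_le_coe_iff_finite_ncard_le.mp ?_
  calc S.encard ≤ ∑ p : Fin n → ZMod 2, (S ∩ parityClass B p).encard :=
        (Set.encard_le_encard hcover).trans (Set.encard_iUnion_le_of_fintype _)
    _ ≤ ∑ _p : Fin n → ZMod 2, 2 := Finset.sum_le_sum fun p _ => hclass p
    _ = 2 ^ (n + 1) := by simp [pow_succ, mul_comm]

/-- The set of shortest nonzero vectors of a lattice of rank `n`
is finite with at most `2^{n+1}` elements. -/
theorem stmt7 {m n : ℕ} (B : Fin n → EuclideanSpace ℝ (Fin m))
    (hB : LinearIndependent ℝ B) :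
    {v ∈ latticeOf B | ‖v‖ = lambda1 (latticeOf B)}.Finite ∧
    {v ∈ latticeOf B | ‖v‖ = lambda1 (latticeOf B)}.ncard ≤ 2 ^ (n + 1) :=
  stmt7_general B

end
end

section
/- Let L be a lattice of rank n ≥ 2 in ℝ^m with λ2(L) ≥ γ·λ1(L) for some real γ > 0, and let v ∈ L be a primitive vector with ‖v‖ ≠ λ1(L). Then there exists w ∈ L such that P_v w ≠ 0 and ‖P_v w‖ ≤ ‖v‖/γ. -/
/-
Let `u` be a shortest nonzero lattice vector, so `‖u‖ = λ₁ < ‖v‖`. If `u` were a real multiple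
of `v`, then `v = t • u` with `|t| > 1`; rounding `t` to an integer `k`, the lattice vector
`v - k • u` is shorter than `u`, hence zero, and `v = k • u` with `|k| ≥ 2` contradicts
primitivity. So `u` and `v` are independent, which gives `γ λ₁ ≤ λ₂ ≤ ‖v‖`, and
`‖P_v u‖ ≤ ‖u‖ = λ₁ ≤ ‖v‖ / γ` with `P_v u ≠ 0`.
-/

noncomputable section

/-- `v` is a primitive vector of the lattice `L`: it is a nonzero element of `L` that
is not of the form `k • w` with `w ∈ L` and `|k| ≥ 2`. -/
def IsPrimitive {m : ℕ} (L : Set (EuclideanSpace ℝ (Fin m)))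
    (v : EuclideanSpace ℝ (Fin m)) : Prop :=
  v ∈ L ∧ v ≠ 0 ∧ ∀ w ∈ L, ∀ k : ℤ, 2 ≤ |k| → v ≠ (k : ℝ) • w

/-- `projPerp v w`: the orthogonal projection of `w` onto the orthogonal complement of
the line spanned by `v`. -/
def projPerp {m : ℕ} (v w : EuclideanSpace ℝ (Fin m)) : EuclideanSpace ℝ (Fin m) :=
  (Submodule.orthogonalProjection ((Submodule.span ℝ {v})ᗮ) w : EuclideanSpace ℝ (Fin m))

open Submodule Metric

section Lattice

variable {m n : ℕ}

lemma latticeOf_eq_span (B : Fin n → EuclideanSpace ℝ (Fin m)) :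
    latticeOf B = (span ℤ (Set.range B) : Set (EuclideanSpace ℝ (Fin m))) := by
  ext w
  simp only [latticeOf, Set.mem_ofPred_eq, SetLike.mem_coe, mem_span_range_iff_exists_fun,
    Int.cast_smul_eq_zsmul, eq_comm]

lemma finite_latticeOf_inter_closedBall {B : Fin n → EuclideanSpace ℝ (Fin m)}
    (hB : LinearIndependent ℝ B) (R : ℝ) : (latticeOf B ∩ closedBall 0 R).Finite := by
  set b := Module.Basis.span hB
  refine ((ZSpan.setFinite_inter b (isBounded_closedBall (x := 0) (r := R))).image
    Subtype.val).subset ?_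
  rintro _ ⟨⟨x, rfl⟩, hR⟩
  have hval : ((∑ i, (x i : ℝ) • b i : span ℝ (Set.range B)) : EuclideanSpace ℝ (Fin m)) =
      ∑ i, (x i : ℝ) • B i := by simp [b]
  refine ⟨∑ i, (x i : ℝ) • b i, ⟨?_, ?_⟩, hval⟩
  · simpa [mem_closedBall, hval] using hR
  · exact sum_mem fun i _ => Int.cast_smul_eq_zsmul ℝ (x i) (b i) ▸
      zsmul_mem (subset_span (Set.mem_range_self i)) _

end Lattice

section Minima

variable {m : ℕ} {L : Set (EuclideanSpace ℝ (Fin m))} {u v w : EuclideanSpace ℝ (Fin m)}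

lemma lambda1_le_norm_s9 (hw : w ∈ L) (hw0 : w ≠ 0) : lambda1 L ≤ ‖w‖ :=
  csInf_le ⟨0, by rintro r ⟨w, -, -, rfl⟩; exact norm_nonneg w⟩ ⟨w, hw, hw0, rfl⟩

lemma exists_norm_eq_lambda1 (hL : ∀ R, (L ∩ closedBall 0 R).Finite) (hv : v ∈ L)
    (hv0 : v ≠ 0) : ∃ u ∈ L, u ≠ 0 ∧ ‖u‖ = lambda1 L ∧ ∀ w ∈ L, w ≠ 0 → ‖u‖ ≤ ‖w‖ := by
  have hfin : {w | w ∈ L ∧ w ≠ 0 ∧ ‖w‖ ≤ ‖v‖}.Finite :=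
    (hL ‖v‖).subset fun w ⟨hw, _, hwv⟩ => ⟨hw, mem_closedBall_zero_iff.mpr hwv⟩
  obtain ⟨u, ⟨hu, hu0, huv⟩, hmin⟩ :=
    Set.exists_min_image _ norm hfin ⟨v, hv, hv0, le_rfl⟩
  have hshort : ∀ w ∈ L, w ≠ 0 → ‖u‖ ≤ ‖w‖ := fun w hw hw0 =>
    (le_total ‖w‖ ‖v‖).elim (fun hwv => hmin w ⟨hw, hw0, hwv⟩) huv.trans
  refine ⟨u, hu, hu0, le_antisymm ?_ (lambda1_le_norm_s9 hu hu0), hshort⟩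
  exact le_csInf ⟨_, v, hv, hv0, rfl⟩ fun _ ⟨w, hw, hw0, hwr⟩ => hwr ▸ hshort w hw hw0

lemma lambda2_le {r : ℝ} (hu : u ∈ L) (hv : v ∈ L) (huv : LinearIndependent ℝ ![u, v])
    (hur : ‖u‖ ≤ r) (hvr : ‖v‖ ≤ r) : lambda2 L ≤ r :=
  csInf_le ⟨0, by rintro r ⟨u, -, -, -, -, hu, -⟩; exact (norm_nonneg u).trans hu⟩
    ⟨u, hu, v, hv, huv, hur, hvr⟩

end Minima

lemma notMem_span_singleton_of_isPrimitive {m : ℕ}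
    {L : AddSubgroup (EuclideanSpace ℝ (Fin m))} {u v : EuclideanSpace ℝ (Fin m)}
    (hu : u ∈ L) (hu0 : u ≠ 0) (hmin : ∀ w ∈ L, w ≠ 0 → ‖u‖ ≤ ‖w‖)
    (hv : IsPrimitive L v) (huv : ‖u‖ < ‖v‖) : u ∉ span ℝ {v} := by
  intro hspan
  obtain ⟨c, hc⟩ := mem_span_singleton.mp hspan
  have hc0 : c ≠ 0 := by rintro rfl; exact hu0 (by simp [← hc])
  have hvu : v = c⁻¹ • u := by rw [← hc, smul_smul, inv_mul_cancel₀ hc0, one_smul]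
  set k := round c⁻¹
  have hdiff : v - (k : ℝ) • u ∈ L :=
    sub_mem hv.1 (Int.cast_smul_eq_zsmul ℝ k u ▸ zsmul_mem hu k)
  have hshort : ‖v - (k : ℝ) • u‖ < ‖u‖ := by
    rw [hvu, ← sub_smul, norm_smul, Real.norm_eq_abs]
    nlinarith [abs_sub_round c⁻¹, norm_pos_iff.mpr hu0]
  have hvk : v = (k : ℝ) • u :=
    sub_eq_zero.mp (by_contra fun h => (hmin _ hdiff h).not_gt hshort)
  have hk : |k| ≤ 1 := by
    by_contra! h
    exact hv.2.2 u hu k h hvk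
  have : ‖v‖ ≤ ‖u‖ := by
    rw [hvk, norm_smul, Real.norm_eq_abs, ← Int.cast_abs]
    exact mul_le_of_le_one_left (norm_nonneg u) (by exact_mod_cast hk)
  linarith

lemma projPerp_eq_zero_iff {m : ℕ} {v w : EuclideanSpace ℝ (Fin m)} :
    projPerp v w = 0 ↔ w ∈ span ℝ {v} := by
  rw [projPerp, ZeroMemClass.coe_eq_zero, orthogonalProjectionOnto_eq_zero_iff,
    orthogonal_orthogonal]

lemma norm_projPerp_le {m : ℕ} (v w : EuclideanSpace ℝ (Fin m)) : ‖projPerp v w‖ ≤ ‖w‖ :=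
  norm_orthogonalProjectionOnto_apply_le _ w

theorem stmt9_general {m n : ℕ} (B : Fin n → EuclideanSpace ℝ (Fin m))
    (hB : LinearIndependent ℝ B) (γ : ℝ) (hγ : 0 < γ)
    (hgap : γ * lambda1 (latticeOf B) ≤ lambda2 (latticeOf B))
    (v : EuclideanSpace ℝ (Fin m)) (hv : IsPrimitive (latticeOf B) v)
    (hvne : ‖v‖ ≠ lambda1 (latticeOf B)) :
    ∃ w ∈ latticeOf B, projPerp v w ≠ 0 ∧ ‖projPerp v w‖ ≤ ‖v‖ / γ := by
  have hfin := finite_latticeOf_inter_closedBall hB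
  rw [latticeOf_eq_span] at hfin hgap hv hvne ⊢
  obtain ⟨u, huL, hu0, hu, hmin⟩ := exists_norm_eq_lambda1 hfin hv.1 hv.2.1
  have huv : ‖u‖ < ‖v‖ := hu ▸ (lambda1_le_norm_s9 hv.1 hv.2.1).lt_of_ne' hvne
  have hns := notMem_span_singleton_of_isPrimitive (L := (span ℤ (Set.range B)).toAddSubgroup)
    huL hu0 hmin hv huv
  have hv₂ : lambda2 (span ℤ (Set.range B) : Set (EuclideanSpace ℝ (Fin m))) ≤ ‖v‖ :=
    lambda2_le huL hv.1
      (linearIndependent_fin2.mpr ⟨hv.2.1, fun a ha => hns (mem_span_singleton.mpr ⟨a, ha⟩)⟩)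
      huv.le le_rfl
  refine ⟨u, huL, projPerp_eq_zero_iff.not.mpr hns, ?_⟩
  calc ‖projPerp v u‖ ≤ ‖u‖ := norm_projPerp_le v u
    _ = lambda1 _ := hu
    _ ≤ ‖v‖ / γ := by rw [le_div_iff₀ hγ]; linarith

/-- If `L` is a lattice of rank `n ≥ 2` with `λ₂(L) ≥ γ·λ₁(L)` for some
`γ > 0`, and `v ∈ L` is a primitive vector with `‖v‖ ≠ λ₁(L)`, then there is `w ∈ L`
whose projection orthogonal to `v` is nonzero and of norm at most `‖v‖/γ`. -/
theorem stmt9 {m n : ℕ} (hn : 2 ≤ n) (B : Fin n → EuclideanSpace ℝ (Fin m))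
    (hB : LinearIndependent ℝ B) (γ : ℝ) (hγ : 0 < γ)
    (hgap : γ * lambda1 (latticeOf B) ≤ lambda2 (latticeOf B))
    (v : EuclideanSpace ℝ (Fin m)) (hv : IsPrimitive (latticeOf B) v)
    (hvne : ‖v‖ ≠ lambda1 (latticeOf B)) :
    ∃ w ∈ latticeOf B, projPerp v w ≠ 0 ∧ ‖projPerp v w‖ ≤ ‖v‖ / γ :=
  stmt9_general B hB γ hγ hgap v hv hvne

end
end

section
/- Let B = (b_1, …, b_n) be a basis of linearly independent vectors in ℝ^m, let W ⊆ {1, …, n} be nonempty, and fix i ∈ W. Define b'_j = b_j for j ∉ W, b'_j = b_j − b_i for j ∈ W with j ≠ i, and b'_i = 2b_i, and let B' = (b'_1, …, b'_n). Then for every α ∈ ℤ^n, the vector Σ_{j=1}^n α_j b_j belongs to L(B') if and only if Σ_{j ∈ W} α_j is even. -/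
noncomputable section

/-!
Write a vector of `L(B')` in `B`-coordinates: if its `B'`-coordinates are `x`, every coordinate
except the `i`-th stays `x j`, while the `i`-th becomes `2 x_i - ∑_{k ∈ W, k ≠ i} x_k`. Hence the
sum over `W` of its `B`-coordinates is `2 x_i`. Conversely, if `∑_{j ∈ W} α_j = 2k`, replacing
`α_i` by `k` gives `B'`-coordinates of `∑ α_j b_j`. Linear independence of `B` makes
`B`-coordinates unique, so these are the only vectors of `L(B')` of the form `∑ α_j b_j`.
-/

open Finset

theorem LinearIndependent.intCast_sum_smul_inj {ι V : Type*} [Fintype ι] [AddCommGroup V]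
    [Module ℝ V] {B : ι → V} (hB : LinearIndependent ℝ B) {α β : ι → ℤ} :
    ∑ j, (α j : ℝ) • B j = ∑ j, (β j : ℝ) • B j ↔ α = β := by
  refine ⟨fun h => funext fun j => ?_, fun h => h ▸ rfl⟩
  exact_mod_cast Fintype.linearIndependent_iffₛ.mp hB _ _ h j

section BaseChange

variable {ι : Type*} [DecidableEq ι]

/-- The `B`-coordinates of `∑ j, x j • B' j`, where `B' i = 2 • B i`, `B' j = B j - B i` for
`j ∈ W \ {i}` and `B' j = B j` otherwise. -/
def baseChangeCoords (W : Finset ι) (i : ι) (x : ι → ℤ) : ι → ℤ :=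
  Function.update x i (2 * x i - ∑ k ∈ W.erase i, x k)

theorem sum_smul_eq_sum_baseChangeCoords_smul [Fintype ι] {V : Type*} [AddCommGroup V]
    [Module ℝ V] {W : Finset ι} {i : ι} {B B' : ι → V}
    (hB' : ∀ j, B' j = if j = i then (2 : ℝ) • B i else if j ∈ W then B j - B i else B j)
    (x : ι → ℤ) :
    ∑ j, (x j : ℝ) • B' j = ∑ j, (baseChangeCoords W i x j : ℝ) • B j := by
  have h_off : ∀ j ∈ univ.erase i,
      (x j : ℝ) • B' j = (x j : ℝ) • B j - (if j ∈ W then (x j : ℝ) else 0) • B i := by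
    intro j hj
    rw [hB' j, if_neg (ne_of_mem_erase hj)]
    split_ifs <;> simp [smul_sub]
  have h_coords_off : ∀ j ∈ univ.erase i,
      (baseChangeCoords W i x j : ℝ) • B j = (x j : ℝ) • B j :=
    fun j hj => by rw [baseChangeCoords, Function.update_of_ne (ne_of_mem_erase hj)]
  have h_filter : ∑ j ∈ univ.erase i, (if j ∈ W then (x j : ℝ) else 0)
      = ∑ j ∈ W.erase i, (x j : ℝ) := by
    rw [← sum_filter]
    congr 1
    ext j
    simp [and_comm]
  rw [← add_sum_erase _ _ (mem_univ i), ← add_sum_erase _ _ (mem_univ i), sum_congr rfl h_off,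
    sum_congr rfl h_coords_off, sum_sub_distrib, ← sum_smul, h_filter, hB' i, if_pos rfl,
    baseChangeCoords, Function.update_self]
  push_cast
  module

theorem sum_baseChangeCoords {W : Finset ι} {i : ι} (hi : i ∈ W) (x : ι → ℤ) :
    ∑ j ∈ W, baseChangeCoords W i x j = 2 * x i := by
  rw [← add_sum_erase _ _ hi, baseChangeCoords, Function.update_self,
    sum_congr rfl fun k hk => Function.update_of_ne (ne_of_mem_erase hk) _ _]
  ring

theorem baseChangeCoords_update_of_sum_eq {W : Finset ι} {i : ι} (hi : i ∈ W) {α : ι → ℤ}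
    {k : ℤ} (hk : ∑ j ∈ W, α j = k + k) :
    baseChangeCoords W i (Function.update α i k) = α := by
  rw [← add_sum_erase _ _ hi] at hk
  ext j
  rcases eq_or_ne j i with rfl | hj
  · rw [baseChangeCoords, Function.update_self, Function.update_self,
      sum_congr rfl fun k hk => Function.update_of_ne (ne_of_mem_erase hk) _ _]
    linarith
  · simp [baseChangeCoords, hj]

theorem exists_baseChangeCoords_eq_iff {W : Finset ι} {i : ι} (hi : i ∈ W) (α : ι → ℤ) :
    (∃ x, baseChangeCoords W i x = α) ↔ Even (∑ j ∈ W, α j) := by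
  constructor
  · rintro ⟨x, rfl⟩
    exact ⟨x i, by rw [sum_baseChangeCoords hi, two_mul]⟩
  · rintro ⟨k, hk⟩
    exact ⟨_, baseChangeCoords_update_of_sum_eq hi hk⟩

end BaseChange

theorem stmt14_general {m n : ℕ} (B : Fin n → EuclideanSpace ℝ (Fin m))
    (hB : LinearIndependent ℝ B)
    (W : Finset (Fin n)) (i : Fin n) (hi : i ∈ W)
    (B' : Fin n → EuclideanSpace ℝ (Fin m))
    (hB' : ∀ j, B' j =
      if j = i then (2 : ℝ) • B i else if j ∈ W then B j - B i else B j)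
    (α : Fin n → ℤ) :
    (∑ j, (α j : ℝ) • B j) ∈ latticeOf B' ↔ Even (∑ j ∈ W, α j) := by
  calc (∑ j, (α j : ℝ) • B j) ∈ latticeOf B'
      ↔ ∃ x, ∑ j, (α j : ℝ) • B j = ∑ j, (baseChangeCoords W i x j : ℝ) • B j := by
        simp only [latticeOf, Set.mem_ofPred_eq, sum_smul_eq_sum_baseChangeCoords_smul hB']
    _ ↔ ∃ x, baseChangeCoords W i x = α := by simp only [hB.intCast_sum_smul_inj, eq_comm]
    _ ↔ Even (∑ j ∈ W, α j) := exists_baseChangeCoords_eq_iff hi α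

/-- Let `B` be linearly independent, `W ⊆ {1, …, n}` nonempty and `i ∈ W`.
Define `b'_j = b_j` for `j ∉ W`, `b'_j = b_j - b_i` for `j ∈ W`, `j ≠ i`, and
`b'_i = 2b_i`. Then for every `α ∈ ℤⁿ`, `∑ α_j b_j ∈ L(B')` iff `∑_{j ∈ W} α_j` is even. -/
theorem stmt14 {m n : ℕ} (B : Fin n → EuclideanSpace ℝ (Fin m))
    (hB : LinearIndependent ℝ B)
    (W : Finset (Fin n)) (hW : W.Nonempty) (i : Fin n) (hi : i ∈ W)
    (B' : Fin n → EuclideanSpace ℝ (Fin m))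
    (hB' : ∀ j, B' j =
      if j = i then (2 : ℝ) • B i else if j ∈ W then B j - B i else B j)
    (α : Fin n → ℤ) :
    (∑ j, (α j : ℝ) • B j) ∈ latticeOf B' ↔ Even (∑ j ∈ W, α j) :=
  stmt14_general B hB W i hi B' hB' α

end
end
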